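/- arXiv:2511.10884 — 7 statements merged into one kernel-verified Lean document; each statement's English description precedes it below -/
import Mathlib

section
/- Let H be a Hilbert space, φ : H → ℝ Fréchet differentiable and λ-convex with λ ≥ 0, let τ > 0, and suppose ξ*, v ∈ H satisfy ξ* = v − (τ/2)(∇φ(ξ*) + ∇φ(v)). Then ‖∇φ(ξ*)‖ ≤ ‖∇φ(v)‖. -/
/-!
A convex differentiable function lies above its tangent planes, so its gradient is monotone:
`0 ≤ ⟪∇φ ξ - ∇φ v, ξ - v⟫`. Substituting the trapezoidal relation `ξ - v = -(τ/2) (∇φ ξ + ∇φ v)`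
turns the right-hand side into `(τ/2) (‖∇φ v‖² - ‖∇φ ξ‖²)`.
-/

open RealInnerProductSpace Set

section NormedSpace

variable {E : Type*} [NormedAddCommGroup E] [NormedSpace ℝ E]

lemma strongConvexOn_univ_of_forall_le {m : ℝ} {f : E → ℝ}
    (h : ∀ x y : E, ∀ t ∈ Icc (0:ℝ) 1,
      f ((1 - t) • x + t • y) ≤ (1 - t) * f x + t * f y - (m / 2) * t * (1 - t) * ‖x - y‖ ^ 2) :
    StrongConvexOn univ m f := by
  refine ⟨convex_univ, fun x _ y _ a b _ hb hab ↦ ?_⟩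
  obtain rfl : a = 1 - b := by linarith
  have := h x y b ⟨hb, by linarith⟩
  simp only [smul_eq_mul]
  linarith

lemma StrongConvexOn.convexOn {s : Set E} {m : ℝ} {f : E → ℝ} (hf : StrongConvexOn s m f)
    (hm : 0 ≤ m) : ConvexOn ℝ s f :=
  UniformConvexOn.convexOn hf fun r ↦ by dsimp; positivity

lemma ConvexOn.fderiv_sub_le_sub {s : Set E} {f : E → ℝ} {f' : E →L[ℝ] ℝ} {x y : E}
    (hf : ConvexOn ℝ s f) (hx : x ∈ s) (hy : y ∈ s) (hf' : HasFDerivAt f f' x) :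
    f' (y - x) ≤ f y - f x := by
  set ℓ : ℝ →ᵃ[ℝ] E := AffineMap.lineMap x y
  have hℓ0 : ℓ 0 = x := AffineMap.lineMap_apply_zero x y
  have hℓ1 : ℓ 1 = y := AffineMap.lineMap_apply_one x y
  have hline : ConvexOn ℝ (ℓ ⁻¹' s) (f ∘ ℓ) := hf.comp_affineMap ℓ
  have hderiv : HasDerivAt (f ∘ ℓ) (f' (y - x)) 0 :=
    hf'.comp_hasDerivAt_of_eq 0 AffineMap.hasDerivAt_lineMap hℓ0.symm
  simpa [slope, hℓ0, hℓ1] using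
    hline.le_slope_of_hasDerivAt (by simpa [hℓ0]) (by simpa [hℓ1]) zero_lt_one hderiv

end NormedSpace

section InnerProductSpace

variable {H : Type*} [NormedAddCommGroup H] [InnerProductSpace ℝ H] [CompleteSpace H]
  {s : Set H} {f : H → ℝ} {x y : H}

lemma ConvexOn.inner_gradient_le_sub {f' : H} (hf : ConvexOn ℝ s f) (hx : x ∈ s) (hy : y ∈ s)
    (hf' : HasGradientAt f f' x) : ⟪f', y - x⟫ ≤ f y - f x := by
  simpa using hf.fderiv_sub_le_sub hx hy hf'.hasFDerivAt

lemma ConvexOn.inner_gradient_sub_nonneg {gx gy : H} (hf : ConvexOn ℝ s f) (hx : x ∈ s)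
    (hy : y ∈ s) (hgx : HasGradientAt f gx x) (hgy : HasGradientAt f gy y) :
    0 ≤ ⟪gx - gy, x - y⟫ := by
  have hxy := hf.inner_gradient_le_sub hx hy hgx
  have hyx := hf.inner_gradient_le_sub hy hx hgy
  rw [← neg_sub x y, inner_neg_right] at hxy
  rw [inner_sub_left]
  linarith

end InnerProductSpace

theorem trapezoid_gradient_nonincreasing
    {H : Type*} [NormedAddCommGroup H] [InnerProductSpace ℝ H] [CompleteSpace H]
    (lam τ : ℝ) (hlam : 0 ≤ lam) (hτ : 0 < τ)
    (φ : H → ℝ) (g : H → H) (hg : ∀ x, HasGradientAt φ (g x) x)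
    (hconv : ∀ x y : H, ∀ t ∈ Set.Icc (0:ℝ) 1,
      φ ((1 - t) • x + t • y) ≤
        (1 - t) * φ x + t * φ y - (lam / 2) * t * (1 - t) * ‖x - y‖ ^ 2)
    (v ξs : H)
    (himp : ξs = v - (τ / 2) • (g ξs + g v)) :
    ‖g ξs‖ ≤ ‖g v‖ := by
  have hφ : ConvexOn ℝ univ φ := (strongConvexOn_univ_of_forall_le hconv).convexOn hlam
  have hstep : ξs - v = -(τ / 2) • (g ξs + g v) := by
    conv_lhs => rw [himp]
    module
  have hsq : 0 ≤ τ / 2 * (‖g v‖ ^ 2 - ‖g ξs‖ ^ 2) :=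
    calc 0 ≤ ⟪g ξs - g v, ξs - v⟫ :=
          hφ.inner_gradient_sub_nonneg (mem_univ _) (mem_univ _) (hg ξs) (hg v)
      _ = τ / 2 * (‖g v‖ ^ 2 - ‖g ξs‖ ^ 2) := by
        rw [hstep, inner_smul_right, inner_add_right, inner_sub_left, inner_sub_left,
          real_inner_self_eq_norm_sq, real_inner_self_eq_norm_sq, real_inner_comm (g v)]
        ring
  have hnorm_sq : ‖g ξs‖ ^ 2 ≤ ‖g v‖ ^ 2 := by nlinarith
  exact (pow_le_pow_iff_left₀ (norm_nonneg _) (norm_nonneg _) two_ne_zero).mp hnorm_sq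
end

section
/- Let H be a Hilbert space, φ : H → ℝ Fréchet differentiable and λ-convex with λ < 0, and 0 < τ with λ/2 + 1/τ > 0 and λτ > −1. Suppose ξ*, v ∈ H satisfy ξ* = v − (τ/2)(∇φ(ξ*) + ∇φ(v)). Then (1 + λτ)‖∇φ(ξ*)‖² ≤ (1 − λτ)‖∇φ(v)‖². -/
/-!
λ-convexity makes the gradient λ-monotone: `λ‖x - y‖² ≤ ⟪∇φ x - ∇φ y, x - y⟫`. With
`a = ∇φ(ξ*)`, `b = ∇φ(v)`, the trapezoidal relation `ξ* - v = -(τ/2)(a + b)` turns this into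
`λ(τ/2)‖a + b‖² ≤ ‖b‖² - ‖a‖²`, and since `λ ≤ 0` the parallelogram bound
`‖a + b‖² ≤ 2(‖a‖² + ‖b‖²)` gives the claim.
-/

open RealInnerProductSpace Set

section InnerProductSpace

variable {E : Type*} [NormedAddCommGroup E] [InnerProductSpace ℝ E]

theorem ConvexOn.fderiv_apply_sub_le {f : E → ℝ} {f' : E → StrongDual ℝ E}
    (hf : ConvexOn ℝ univ f) (hf' : ∀ x, HasFDerivAt f (f' x) x) (x y : E) :
    f' y (x - y) ≤ f' x (x - y) := by
  set l := AffineMap.lineMap (k := ℝ) y x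
  have hl : ConvexOn ℝ univ (f ∘ l) := hf.comp_affineMap l
  have hderiv (t : ℝ) : HasDerivAt (f ∘ l) (f' (l t) (x - y)) t :=
    (hf' (l t)).comp_hasDerivAt t AffineMap.hasDerivAt_lineMap
  have h₀ := hl.le_slope_of_hasDerivAt (mem_univ 0) (mem_univ 1) one_pos (hderiv 0)
  have h₁ := hl.slope_le_of_hasDerivAt (mem_univ 0) (mem_univ 1) one_pos (hderiv 1)
  simpa [l] using h₀.trans h₁

theorem StrongConvexOn.mul_norm_sub_sq_le_fderiv_apply_sub {f : E → ℝ} {f' : E → StrongDual ℝ E}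
    {m : ℝ} (hf : StrongConvexOn univ m f) (hf' : ∀ x, HasFDerivAt f (f' x) x) (x y : E) :
    m * ‖x - y‖ ^ 2 ≤ f' x (x - y) - f' y (x - y) := by
  have hψ' (z : E) : HasFDerivAt (fun z ↦ f z - m / 2 * ‖z‖ ^ 2)
      (f' z - (m / 2) • (2 • innerSL ℝ z)) z :=
    (hf' z).sub ((hasStrictFDerivAt_norm_sq z).hasFDerivAt.const_mul (m / 2))
  have h := (strongConvexOn_iff_convex.1 hf).fderiv_apply_sub_le hψ' x y
  have hnorm : ⟪x, x - y⟫ - ⟪y, x - y⟫ = ‖x - y‖ ^ 2 := by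
    rw [← inner_sub_left, real_inner_self_eq_norm_sq]
  simp only [sub_apply, smul_apply, innerSL_apply_apply, smul_eq_mul, nsmul_eq_mul,
    Nat.cast_ofNat] at h
  linear_combination h - m * hnorm

theorem StrongConvexOn.mul_norm_sub_sq_le_inner_gradient_sub [CompleteSpace E] {f : E → ℝ}
    {g : E → E} {m : ℝ} (hf : StrongConvexOn univ m f) (hg : ∀ x, HasGradientAt f (g x) x)
    (x y : E) : m * ‖x - y‖ ^ 2 ≤ ⟪g x - g y, x - y⟫ := by
  rw [inner_sub_left]
  exact hf.mul_norm_sub_sq_le_fderiv_apply_sub (fun x ↦ (hg x).hasFDerivAt) x y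

theorem strongConvexOn_univ_of_le {f : E → ℝ} {m : ℝ}
    (hf : ∀ x y : E, ∀ t ∈ Icc (0 : ℝ) 1,
      f ((1 - t) • x + t • y) ≤ (1 - t) * f x + t * f y - (m / 2) * t * (1 - t) * ‖x - y‖ ^ 2) :
    StrongConvexOn univ m f := by
  refine ⟨convex_univ, fun x _ y _ a b ha hb hab ↦ ?_⟩
  obtain rfl : a = 1 - b := by linarith
  have := hf x y b ⟨hb, by linarith⟩
  simp only [smul_eq_mul]
  linarith

theorem real_inner_sub_add (a b : E) : ⟪a - b, a + b⟫ = ‖a‖ ^ 2 - ‖b‖ ^ 2 := by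
  rw [inner_sub_left, inner_add_right, inner_add_right, real_inner_self_eq_norm_sq,
    real_inner_self_eq_norm_sq, real_inner_comm a b]
  ring

end InnerProductSpace

theorem trapezoid_gradient_bound_neg_lambda_general
    {H : Type*} [NormedAddCommGroup H] [InnerProductSpace ℝ H] [CompleteSpace H]
    (lam τ : ℝ) (hlam : lam < 0) (hτ : 0 < τ)
    (φ : H → ℝ) (g : H → H) (hg : ∀ x, HasGradientAt φ (g x) x)
    (hconv : ∀ x y : H, ∀ t ∈ Set.Icc (0:ℝ) 1,
      φ ((1 - t) • x + t • y) ≤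
        (1 - t) * φ x + t * φ y - (lam / 2) * t * (1 - t) * ‖x - y‖ ^ 2)
    (v ξs : H)
    (himp : ξs = v - (τ / 2) • (g ξs + g v)) :
    (1 + lam * τ) * ‖g ξs‖ ^ 2 ≤ (1 - lam * τ) * ‖g v‖ ^ 2 := by
  have hmono :=
    (strongConvexOn_univ_of_le hconv).mul_norm_sub_sq_le_inner_gradient_sub hg ξs v
  have hstep : ξs - v = (-(τ / 2)) • (g ξs + g v) := by
    linear_combination (norm := module) himp
  rw [hstep, real_inner_smul_right, real_inner_sub_add, norm_smul, mul_pow, Real.norm_eq_abs,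
    sq_abs] at hmono
  have hpar := parallelogram_law_with_norm ℝ (g ξs) (g v)
  have hdefect : 0 ≤ -lam * τ ^ 2 * ‖g ξs - g v‖ ^ 2 :=
    mul_nonneg (mul_nonneg (neg_nonneg.2 hlam.le) (sq_nonneg τ)) (sq_nonneg _)
  have hscaled : τ / 2 * ((1 + lam * τ) * ‖g ξs‖ ^ 2 - (1 - lam * τ) * ‖g v‖ ^ 2) ≤ 0 := by
    linear_combination hmono - (lam * τ ^ 2 / 4) * hpar + hdefect / 4
  exact sub_nonpos.1 (nonpos_of_mul_nonpos_right hscaled (half_pos hτ))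

theorem trapezoid_gradient_bound_neg_lambda
    {H : Type*} [NormedAddCommGroup H] [InnerProductSpace ℝ H] [CompleteSpace H]
    (lam τ : ℝ) (hlam : lam < 0) (hτ : 0 < τ)
    (hc : lam / 2 + 1 / τ > 0) (hlτ : lam * τ > -1)
    (φ : H → ℝ) (g : H → H) (hg : ∀ x, HasGradientAt φ (g x) x)
    (hconv : ∀ x y : H, ∀ t ∈ Set.Icc (0:ℝ) 1,
      φ ((1 - t) • x + t • y) ≤
        (1 - t) * φ x + t * φ y - (lam / 2) * t * (1 - t) * ‖x - y‖ ^ 2)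
    (v ξs : H)
    (himp : ξs = v - (τ / 2) • (g ξs + g v)) :
    (1 + lam * τ) * ‖g ξs‖ ^ 2 ≤ (1 - lam * τ) * ‖g v‖ ^ 2 :=
  trapezoid_gradient_bound_neg_lambda_general lam τ hlam hτ φ g hg hconv v ξs himp
end

section
/- Let H be a Hilbert space, φ : H → ℝ Fréchet differentiable, and suppose X_{n+1} minimizes ξ ↦ (1/2)(φ(ξ) + ⟨∇φ(X_n), ξ⟩) + (1/(2τ))‖ξ − X_n‖² and hence satisfies X_{n+1} = X_n − (τ/2)(∇φ(X_{n+1}) + ∇φ(X_n)). Then the energy is almost decreasing: φ(X_{n+1}) − φ(X_n) ≤ (τ/4)(‖∇φ(X_n)‖² − ‖∇φ(X_{n+1})‖²). -/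
open RealInnerProductSpace

theorem trapezoid_energy_almost_decreasing
    {H : Type*} [NormedAddCommGroup H] [InnerProductSpace ℝ H] [CompleteSpace H]
    (τ : ℝ) (hτ : 0 < τ)
    (φ : H → ℝ) (g : H → H) (hg : ∀ x, HasGradientAt φ (g x) x)
    (X₀ X₁ : H)
    (hmin : ∀ ξ : H,
      (1 / 2) * (φ X₁ + ⟪g X₀, X₁⟫) + (1 / (2 * τ)) * ‖X₁ - X₀‖ ^ 2 ≤
      (1 / 2) * (φ ξ + ⟪g X₀, ξ⟫) + (1 / (2 * τ)) * ‖ξ - X₀‖ ^ 2)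
    (himp : X₁ = X₀ - (τ / 2) • (g X₁ + g X₀)) :
    φ X₁ - φ X₀ ≤ (τ / 4) * (‖g X₀‖ ^ 2 - ‖g X₁‖ ^ 2) := by
  have h := hmin X₀
  have hd : X₁ - X₀ = (-(τ / 2)) • (g X₁ + g X₀) := by
    conv_lhs => rw [himp]
    module
  have e1 : ⟪g X₀, X₁⟫ - ⟪g X₀, X₀⟫ =
      -(τ / 2) * (⟪g X₁, g X₀⟫ + ‖g X₀‖ ^ 2) := by
    rw [← inner_sub_right, hd, real_inner_smul_right, inner_add_right,
      real_inner_self_eq_norm_sq, real_inner_comm]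
  have e2 : ‖X₁ - X₀‖ ^ 2 =
      (τ / 2) ^ 2 * (‖g X₁‖ ^ 2 + 2 * ⟪g X₁, g X₀⟫ + ‖g X₀‖ ^ 2) := by
    rw [hd, norm_smul, mul_pow, ← norm_add_sq_real]
    simp [abs_of_pos hτ, neg_div]
  rw [sub_self, norm_zero] at h
  rw [e2] at h
  have hc : (1 / (2 * τ)) * ((τ / 2) ^ 2 * (‖g X₁‖ ^ 2 + 2 * ⟪g X₁, g X₀⟫ + ‖g X₀‖ ^ 2))
      = (τ / 8) * (‖g X₁‖ ^ 2 + 2 * ⟪g X₁, g X₀⟫ + ‖g X₀‖ ^ 2) := by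
    field_simp
    ring
  rw [hc] at h
  nlinarith [h, e1]
end

section
/- For all x ≤ 0, −(x + e^{2x}(x − 1) + 1) ≤ −(2/3)x³. -/
theorem exp_ineq_neg_cubed (x : ℝ) (hx : x ≤ 0) :
    -(x + Real.exp (2 * x) * (x - 1) + 1) ≤ -(2 / 3) * x ^ 3 := by
  set P : ℝ := 1 - 2*x + 2*x^2 - 4/3*x^3 + 2/3*x^4 with hP
  have hPpos : 0 < P := by
    rw [hP]; nlinarith [sq_nonneg x, sq_nonneg (x-1), sq_nonneg (x^2-x), sq_nonneg (x^2-x-1)]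
  have hsum : P ≤ Real.exp (-2*x) := by
    have h := Real.sum_le_exp_of_nonneg (x := -2*x) (by linarith) 5
    have hexpand : ∑ i ∈ Finset.range 5, (-2*x) ^ i / (Nat.factorial i) = P := by
      rw [hP]
      simp [Finset.sum_range_succ, Nat.factorial]
      ring
    rw [hexpand] at h
    exact h
  have hEpos : 0 < Real.exp (2 * x) := Real.exp_pos _
  have hmul : Real.exp (2 * x) * Real.exp (-2*x) = 1 := by
    rw [← Real.exp_add]; norm_num
  have hEP : Real.exp (2 * x) * P ≤ 1 := by
    calc Real.exp (2 * x) * P ≤ Real.exp (2 * x) * Real.exp (-2*x) :=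
          mul_le_mul_of_nonneg_left hsum hEpos.le
      _ = 1 := hmul
  have hx1 : (0:ℝ) ≤ 1 - x := by linarith
  have key : (x - 1) / P ≤ Real.exp (2 * x) * (x - 1) := by
    rw [div_le_iff₀ hPpos]
    nlinarith [mul_le_mul_of_nonneg_left hEP hx1]
  have hpoly : 2/3*x^3*P ≤ (x+1)*P + (x-1) := by
    rw [hP]
    nlinarith [sq_nonneg (x^2*(x+1)), sq_nonneg (x*(x+1)), sq_nonneg (x+1), sq_nonneg x,
      mul_nonneg (mul_nonneg (neg_nonneg.mpr hx) (neg_nonneg.mpr hx)) (neg_nonneg.mpr hx),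
      sq_nonneg (x^2+x), sq_nonneg (x^3), sq_nonneg (x^2)]
  have h2 : 2/3*x^3 ≤ (x+1) + (x-1)/P := by
    rw [← sub_nonneg]
    have heq : (x+1) + (x-1)/P - 2/3*x^3 = ((x+1)*P + (x-1) - 2/3*x^3*P)/P := by
      field_simp
    rw [heq]
    exact div_nonneg (by linarith) hPpos.le
  linarith [key, h2]
end

section
/- Let H be a Hilbert space, φ : H → ℝ Fréchet differentiable and λ-convex, τ > 0 with λ/2 + 1/τ > 0, and suppose X_{n+1} minimizes ξ ↦ (1/2)(φ(ξ) + ⟨∇φ(X_n), ξ⟩) + (1/(2τ))‖ξ − X_n‖² (so X_{n+1} = X_n − (τ/2)(∇φ(X_{n+1}) + ∇φ(X_n))). Then for every ξ ∈ H: (1/(2τ))(‖ξ − X_{n+1}‖² − ‖ξ − X_n‖²) + (λ/4)(‖ξ − X_n‖² + ‖ξ − X_{n+1}‖²) ≤ φ(ξ) − φ(X_{n+1}) + (τ/4)(‖∇φ(X_n)‖² − ‖∇φ(X_{n+1})‖²) − (1/(2τ) + λ/4)‖X_n − X_{n+1}‖². -/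
/-!
The λ-convex tangent-line inequality, applied at `X₀` towards `ξ`, at `X₁` towards `ξ` and at
`X₁` towards `X₀`, each taken with weight `1/2`, bounds `φ ξ - φ X₁` from below by
gradient terms. Since the trapezoidal step is `X₀ - X₁ = (τ/2) (∇φ X₁ + ∇φ X₀)`, these gradient
terms are exactly the metric terms of the discrete EVI.
-/

open RealInnerProductSpace Set

theorem ConvexOn.add_fderiv_sub_le {E : Type*} [NormedAddCommGroup E] [NormedSpace ℝ E]
    {s : Set E} {f : E → ℝ} {f' : E →L[ℝ] ℝ} {x y : E} (hf : ConvexOn ℝ s f)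
    (hxs : x ∈ s) (hys : y ∈ s) (hx : HasFDerivAt f f' x) :
    f x + f' (y - x) ≤ f y := by
  let line : ℝ →ᵃ[ℝ] E := AffineMap.lineMap x y
  have hderiv : HasDerivAt (f ∘ line) (f' (y - x)) 0 := by
    have hline : HasDerivAt line (y - x) 0 := AffineMap.hasDerivAt_lineMap
    exact (by simpa [line] using hx : HasFDerivAt f f' (line 0)).comp_hasDerivAt 0 hline
  have hslope := (hf.comp_affineMap line).le_slope_of_hasDerivAt (by simpa [line] using hxs)
    (by simpa [line] using hys) zero_lt_one hderiv
  simp only [slope_def_field, Function.comp_apply, line, AffineMap.lineMap_apply_zero,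
    AffineMap.lineMap_apply_one, sub_zero, div_one] at hslope
  linarith

theorem StrongConvexOn.add_inner_add_le {E : Type*} [NormedAddCommGroup E]
    [InnerProductSpace ℝ E] [CompleteSpace E] {s : Set E} {m : ℝ} {f : E → ℝ} {f' x y : E}
    (hf : StrongConvexOn s m f) (hxs : x ∈ s) (hys : y ∈ s) (hx : HasGradientAt f f' x) :
    f x + ⟪f', y - x⟫ + m / 2 * ‖y - x‖ ^ 2 ≤ f y := by
  have hψ := (strongConvexOn_iff_convex.mp hf).add_fderiv_sub_le hxs hys
    (hx.hasFDerivAt.sub ((hasStrictFDerivAt_norm_sq x).hasFDerivAt.const_mul (m / 2)))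
  have hnorm : ‖y‖ ^ 2 = ‖x‖ ^ 2 + 2 * ⟪x, y - x⟫ + ‖y - x‖ ^ 2 := by
    simpa using norm_add_sq_real x (y - x)
  simp only [sub_apply, InnerProductSpace.toDual_apply_apply, smul_apply, coe_innerSL_apply,
    nsmul_eq_mul, Nat.cast_ofNat, smul_eq_mul, hnorm] at hψ
  linarith

theorem strongConvexOn_univ_iff {E : Type*} [NormedAddCommGroup E] [NormedSpace ℝ E]
    {m : ℝ} {f : E → ℝ} :
    StrongConvexOn univ m f ↔ ∀ x y : E, ∀ t ∈ Icc (0 : ℝ) 1,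
      f ((1 - t) • x + t • y) ≤ (1 - t) * f x + t * f y - (m / 2) * t * (1 - t) * ‖x - y‖ ^ 2 := by
  refine ⟨fun hf x y t ht => ?_, fun hf => ⟨convex_univ, fun x _ y _ a b ha hb hab => ?_⟩⟩
  · have := hf.2 (mem_univ x) (mem_univ y) (sub_nonneg.2 ht.2) ht.1 (sub_add_cancel 1 t)
    simp only [smul_eq_mul] at this
    linarith
  · obtain rfl : a = 1 - b := eq_sub_of_add_eq hab
    have := hf x y b ⟨hb, sub_nonneg.1 ha⟩
    simp only [smul_eq_mul]
    linarith

theorem trapezoidal_step_identity {E : Type*} [NormedAddCommGroup E] [InnerProductSpace ℝ E]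
    {τ : ℝ} (hτ : τ ≠ 0) {ξ x₀ x₁ r s : E} (hstep : x₀ - x₁ = (τ / 2) • (r + s)) :
    (1 / (2 * τ)) * (‖ξ - x₁‖ ^ 2 - ‖ξ - x₀‖ ^ 2 + ‖x₀ - x₁‖ ^ 2) - (τ / 4) * (‖s‖ ^ 2 - ‖r‖ ^ 2)
      = (1 / 2) * (⟪s, ξ - x₀⟫ + ⟪r, ξ - x₁⟫ + ⟪r, x₀ - x₁⟫) := by
  rw [show ξ - x₁ = (ξ - x₀) + (x₀ - x₁) by abel, norm_add_sq_real, inner_add_right, hstep]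
  simp only [norm_smul, mul_pow, Real.norm_eq_abs, sq_abs, norm_add_sq_real, real_inner_smul_right,
    inner_add_right, real_inner_comm (ξ - x₀), real_inner_self_eq_norm_sq, real_inner_comm s r]
  field_simp
  ring

theorem discrete_EVI_general
    {H : Type*} [NormedAddCommGroup H] [InnerProductSpace ℝ H] [CompleteSpace H]
    (lam τ : ℝ) (hτ : 0 < τ)
    (φ : H → ℝ) (g : H → H) (hg : ∀ x, HasGradientAt φ (g x) x)
    (hconv : ∀ x y : H, ∀ t ∈ Set.Icc (0:ℝ) 1,
      φ ((1 - t) • x + t • y) ≤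
        (1 - t) * φ x + t * φ y - (lam / 2) * t * (1 - t) * ‖x - y‖ ^ 2)
    (X₀ X₁ : H)
    (himp : X₁ = X₀ - (τ / 2) • (g X₁ + g X₀)) :
    ∀ ξ : H,
      (1 / (2 * τ)) * (‖ξ - X₁‖ ^ 2 - ‖ξ - X₀‖ ^ 2) +
        (lam / 4) * (‖ξ - X₀‖ ^ 2 + ‖ξ - X₁‖ ^ 2) ≤
      φ ξ - φ X₁ + (τ / 4) * (‖g X₀‖ ^ 2 - ‖g X₁‖ ^ 2) -
        (1 / (2 * τ) + lam / 4) * ‖X₀ - X₁‖ ^ 2 := by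
  intro ξ
  have tangent (x y : H) : φ x + ⟪g x, y - x⟫ + lam / 2 * ‖y - x‖ ^ 2 ≤ φ y :=
    (strongConvexOn_univ_iff.mpr hconv).add_inner_add_le (mem_univ x) (mem_univ y) (hg x)
  have hstep : X₀ - X₁ = (τ / 2) • (g X₁ + g X₀) :=
    sub_eq_iff_eq_add'.mpr (eq_sub_iff_add_eq.mp himp).symm
  have key := trapezoidal_step_identity (ξ := ξ) hτ.ne' hstep
  linarith [tangent X₀ ξ, tangent X₁ ξ, tangent X₁ X₀]

theorem discrete_EVI
    {H : Type*} [NormedAddCommGroup H] [InnerProductSpace ℝ H] [CompleteSpace H]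
    (lam τ : ℝ) (hτ : 0 < τ) (hc : lam / 2 + 1 / τ > 0)
    (φ : H → ℝ) (g : H → H) (hg : ∀ x, HasGradientAt φ (g x) x)
    (hconv : ∀ x y : H, ∀ t ∈ Set.Icc (0:ℝ) 1,
      φ ((1 - t) • x + t • y) ≤
        (1 - t) * φ x + t * φ y - (lam / 2) * t * (1 - t) * ‖x - y‖ ^ 2)
    (X₀ X₁ : H)
    (hmin : ∀ ξ : H,
      (1 / 2) * (φ X₁ + ⟪g X₀, X₁⟫) + (1 / (2 * τ)) * ‖X₁ - X₀‖ ^ 2 ≤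
      (1 / 2) * (φ ξ + ⟪g X₀, ξ⟫) + (1 / (2 * τ)) * ‖ξ - X₀‖ ^ 2)
    (himp : X₁ = X₀ - (τ / 2) • (g X₁ + g X₀)) :
    ∀ ξ : H,
      (1 / (2 * τ)) * (‖ξ - X₁‖ ^ 2 - ‖ξ - X₀‖ ^ 2) +
        (lam / 4) * (‖ξ - X₀‖ ^ 2 + ‖ξ - X₁‖ ^ 2) ≤
      φ ξ - φ X₁ + (τ / 4) * (‖g X₀‖ ^ 2 - ‖g X₁‖ ^ 2) -
        (1 / (2 * τ) + lam / 4) * ‖X₀ - X₁‖ ^ 2 :=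
  discrete_EVI_general lam τ hτ φ g hg hconv X₀ X₁ himp
end

section
/- Let H be a Hilbert space, φ : H → ℝ Fréchet differentiable and λ-convex with λ ≥ 0, with ∇φ L-Lipschitz, and let 0 < τ ≤ 1/L. Suppose X_{n+1} = X_n − (τ/2)(∇φ(X_{n+1}) + ∇φ(X_n)). Then ⟨∇φ(X_n), ∇φ(X_{n+1})⟩ ≥ (1 − Lτ)‖∇φ(X_{n+1})‖² and ‖X_n − X_{n+1}‖² ≥ τ²(1 − Lτ/2)‖∇φ(X_{n+1})‖². -/
open RealInnerProductSpace

/-!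
Since `lam ≥ 0`, `φ` is convex, so its gradient is monotone. Pairing `g X₀ - g X₁` with
`X₀ - X₁ = (τ / 2) • (g X₀ + g X₁)` gives `‖g X₁‖ ≤ ‖g X₀‖`, hence `‖X₀ - X₁‖ ≤ τ ‖g X₀‖`, and the
Lipschitz bound gives `‖g X₁ - g X₀‖ ≤ L τ ‖g X₀‖`. Cauchy–Schwarz then yields
`⟪g X₀, g X₁⟫ ≥ (1 - L τ) ‖g X₀‖² ≥ (1 - L τ) ‖g X₁‖²`, using `L τ ≤ 1`. The second bound follows by
expanding `‖X₀ - X₁‖² = (τ / 2)² ‖g X₀ + g X₁‖²` and inserting these two estimates.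
-/

section Gradient

variable {H : Type*} [NormedAddCommGroup H] [InnerProductSpace ℝ H] [CompleteSpace H]
  {s : Set H} {f : H → ℝ} {x y gx gy : H}

theorem ConvexOn.add_inner_sub_le_of_hasGradientAt (hf : ConvexOn ℝ s f) (hx : x ∈ s)
    (hy : y ∈ s) (hgx : HasGradientAt f gx x) :
    f x + ⟪gx, y - x⟫ ≤ f y := by
  -- The derivative at `0` of the convex restriction of `f` to the line through `x` and `y`
  -- is at most its secant slope on `[0, 1]`.
  let ℓ : ℝ →ᵃ[ℝ] H := AffineMap.lineMap x y
  have hderiv : HasDerivAt (f ∘ ℓ) ⟪gx, y - x⟫ 0 := by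
    have hgx' : HasFDerivAt f (InnerProductSpace.toDual ℝ H gx) (ℓ 0) := by
      simpa [ℓ] using hgx.hasFDerivAt
    simpa using hgx'.comp_hasDerivAt (0 : ℝ) AffineMap.hasDerivAt_lineMap
  have hslope : slope (f ∘ ℓ) 0 1 = f y - f x := by simp [slope_def_field, ℓ]
  have := (hf.comp_affineMap ℓ).le_slope_of_hasDerivAt (by simpa [ℓ] using hx)
    (by simpa [ℓ] using hy) zero_lt_one hderiv
  linarith

theorem ConvexOn.inner_sub_sub_nonneg_of_hasGradientAt (hf : ConvexOn ℝ s f) (hx : x ∈ s)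
    (hy : y ∈ s) (hgx : HasGradientAt f gx x) (hgy : HasGradientAt f gy y) :
    0 ≤ ⟪gx - gy, x - y⟫ := by
  have hxy := hf.add_inner_sub_le_of_hasGradientAt hx hy hgx
  have hyx := hf.add_inner_sub_le_of_hasGradientAt hy hx hgy
  have : ⟪gx - gy, x - y⟫ = -⟪gx, y - x⟫ - ⟪gy, x - y⟫ := by
    rw [inner_sub_left, ← neg_sub x y, inner_neg_right]; ring
  linarith

end Gradient

theorem strongConvexOn_univ_of_forall_mem_Icc {H : Type*} [NormedAddCommGroup H]
    [InnerProductSpace ℝ H] {f : H → ℝ} {m : ℝ}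
    (hf : ∀ x y : H, ∀ t ∈ Set.Icc (0:ℝ) 1,
      f ((1 - t) • x + t • y) ≤ (1 - t) * f x + t * f y - (m / 2) * t * (1 - t) * ‖x - y‖ ^ 2) :
    StrongConvexOn Set.univ m f := by
  refine ⟨convex_univ, fun x _ y _ a b ha hb hab => ?_⟩
  obtain rfl : a = 1 - b := by linarith
  have := hf x y b ⟨hb, by linarith⟩
  simp only [smul_eq_mul]
  linarith

section InnerProduct

variable {H : Type*} [NormedAddCommGroup H] [InnerProductSpace ℝ H] {a b : H}

theorem norm_le_of_inner_sub_smul_add_nonneg {c : ℝ} (hc : 0 < c)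
    (h : 0 ≤ ⟪a - b, c • (a + b)⟫) : ‖b‖ ≤ ‖a‖ := by
  have hab : ⟪a - b, a + b⟫ = ‖a‖ ^ 2 - ‖b‖ ^ 2 := by
    rw [inner_sub_left, inner_add_right, inner_add_right, real_inner_self_eq_norm_sq,
      real_inner_self_eq_norm_sq, real_inner_comm b a]
    ring
  rw [real_inner_smul_right, hab] at h
  have : ‖b‖ ^ 2 ≤ ‖a‖ ^ 2 := by nlinarith
  exact le_of_sq_le_sq this (norm_nonneg a)

theorem one_sub_mul_norm_sq_le_inner {K : ℝ} (h : ‖b - a‖ ≤ K * ‖a‖) :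
    (1 - K) * ‖a‖ ^ 2 ≤ ⟪a, b⟫ := by
  have hcs : ⟪a, b - a⟫ ≥ -(‖a‖ * ‖b - a‖) := neg_le_of_abs_le (abs_real_inner_le_norm a (b - a))
  have : ⟪a, b⟫ = ‖a‖ ^ 2 + ⟪a, b - a⟫ := by
    rw [inner_sub_right, real_inner_self_eq_norm_sq]; ring
  nlinarith [norm_nonneg a]

end InnerProduct

theorem trapezoid_lower_bounds_L_smooth
    {H : Type*} [NormedAddCommGroup H] [InnerProductSpace ℝ H] [CompleteSpace H]
    (lam τ L : ℝ) (hlam : 0 ≤ lam) (hL : 0 < L) (hτ : 0 < τ) (hτL : τ ≤ 1 / L)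
    (φ : H → ℝ) (g : H → H) (hg : ∀ x, HasGradientAt φ (g x) x)
    (hconv : ∀ x y : H, ∀ t ∈ Set.Icc (0:ℝ) 1,
      φ ((1 - t) • x + t • y) ≤
        (1 - t) * φ x + t * φ y - (lam / 2) * t * (1 - t) * ‖x - y‖ ^ 2)
    (hLip : ∀ x y : H, ‖g x - g y‖ ≤ L * ‖x - y‖)
    (X₀ X₁ : H)
    (himp : X₁ = X₀ - (τ / 2) • (g X₁ + g X₀)) :
    (1 - L * τ) * ‖g X₁‖ ^ 2 ≤ ⟪g X₀, g X₁⟫ ∧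
    τ ^ 2 * (1 - L * τ / 2) * ‖g X₁‖ ^ 2 ≤ ‖X₀ - X₁‖ ^ 2 := by
  have hφ : ConvexOn ℝ Set.univ φ :=
    strongConvexOn_zero.mp ((strongConvexOn_univ_of_forall_mem_Icc hconv).mono hlam)
  have hLτ : L * τ ≤ 1 := by rwa [le_div_iff₀ hL, mul_comm] at hτL
  set a := g X₀
  set b := g X₁
  have hstep : X₀ - X₁ = (τ / 2) • (a + b) := by
    rw [himp, sub_sub_cancel, add_comm b a]
  have hba : ‖b‖ ≤ ‖a‖ := by
    refine norm_le_of_inner_sub_smul_add_nonneg (half_pos hτ) ?_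
    rw [← hstep]
    exact hφ.inner_sub_sub_nonneg_of_hasGradientAt trivial trivial (hg X₀) (hg X₁)
  have hdist : ‖X₀ - X₁‖ ≤ τ * ‖a‖ := by
    rw [hstep, norm_smul, Real.norm_of_nonneg (half_pos hτ).le]
    nlinarith [norm_add_le a b]
  have hab : (1 - L * τ) * ‖a‖ ^ 2 ≤ ⟪a, b⟫ := by
    refine one_sub_mul_norm_sq_le_inner ?_
    calc ‖b - a‖ ≤ L * ‖X₁ - X₀‖ := hLip X₁ X₀
      _ ≤ L * (τ * ‖a‖) := by rw [norm_sub_rev]; gcongr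
      _ = L * τ * ‖a‖ := by ring
  have hba_sq : ‖b‖ ^ 2 ≤ ‖a‖ ^ 2 := by gcongr
  have hb : (1 - L * τ) * ‖b‖ ^ 2 ≤ ⟪a, b⟫ :=
    (mul_le_mul_of_nonneg_left hba_sq (by linarith)).trans hab
  refine ⟨hb, ?_⟩
  rw [hstep, norm_smul, mul_pow, Real.norm_of_nonneg (half_pos hτ).le, norm_add_sq_real]
  nlinarith [sq_nonneg τ]
end

section
/- Let μ ∈ P₂(ℝ^d) be atomless and m ∈ P₂(ℝ^d), and suppose there exists a Borel map T : ℝ^d → ℝ^d with T_#μ = m and T ∈ L²(ℝ^d; μ). Let φ : P₂(ℝ^d) → ℝ and define the lifts φ_μ^#(ξ) := φ(ξ_#μ) on L²(ℝ^d; μ) and φ_m^#(η) := φ(η_#m) on L²(ℝ^d; m). If φ_μ^# is λ-convex on L²(ℝ^d; μ), then φ_m^# is λ-convex on L²(ℝ^d; m). -/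
/-! Precomposing with `T` turns a pair `η₁, η₂ ∈ L²(m)` into the pair `η₁ ∘ T, η₂ ∘ T ∈ L²(μ)`
with the same push-forwards `(ηᵢ ∘ T)_# μ = (ηᵢ)_# m`, the same interpolants and the same
`L²` distance, so the `λ`-convexity inequality for `φ_μ^#` at `ηᵢ ∘ T` is literally the one for
`φ_m^#` at `ηᵢ`. -/

open MeasureTheory

section LiftConvex

variable {α β E : Type*} [MeasurableSpace α] [MeasurableSpace β]
  [NormedAddCommGroup E] [NormedSpace ℝ E] [MeasurableSpace E] [BorelSpace E]
  [SecondCountableTopology E]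

/-- `λ`-convexity of the lift `ξ ↦ φ (ξ_# μ)` on measurable maps in `L²(μ)`. -/
def IsLiftConvex (φ : Measure E → ℝ) (μ : Measure α) (lam : ℝ) : Prop :=
  ∀ ξ₁ ξ₂ : α → E, Measurable ξ₁ → Measurable ξ₂ →
    Integrable (fun x => ‖ξ₁ x‖ ^ 2) μ → Integrable (fun x => ‖ξ₂ x‖ ^ 2) μ →
    ∀ t ∈ Set.Icc (0:ℝ) 1,
      φ (μ.map (fun x => (1 - t) • ξ₁ x + t • ξ₂ x)) ≤
        (1 - t) * φ (μ.map ξ₁) + t * φ (μ.map ξ₂) -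
          (lam / 2) * t * (1 - t) * ∫ x, ‖ξ₁ x - ξ₂ x‖ ^ 2 ∂μ

theorem IsLiftConvex.map {φ : Measure E → ℝ} {μ : Measure α} {lam : ℝ} (h : IsLiftConvex φ μ lam)
    {T : α → β} (hT : Measurable T) : IsLiftConvex φ (μ.map T) lam := by
  intro η₁ η₂ hη₁ hη₂ hI₁ hI₂ t ht
  have hsq_comp : ∀ {η : β → E}, Measurable η → Integrable (fun y => ‖η y‖ ^ 2) (μ.map T) →
      Integrable (fun x => ‖(η ∘ T) x‖ ^ 2) μ := fun hη hI =>
    (integrable_map_measure (hη.norm.pow_const 2).aestronglyMeasurable hT.aemeasurable).mp hI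
  have hmix : Measurable fun y => (1 - t) • η₁ y + t • η₂ y := by fun_prop
  have hdist : ∫ x, ‖(η₁ ∘ T) x - (η₂ ∘ T) x‖ ^ 2 ∂μ = ∫ y, ‖η₁ y - η₂ y‖ ^ 2 ∂(μ.map T) :=
    (integral_map hT.aemeasurable ((hη₁.sub hη₂).norm.pow_const 2).aestronglyMeasurable).symm
  have key := h (η₁ ∘ T) (η₂ ∘ T) (hη₁.comp hT) (hη₂.comp hT) (hsq_comp hη₁ hI₁)
    (hsq_comp hη₂ hI₂) t ht
  rw [hdist, ← Measure.map_map hη₁ hT, ← Measure.map_map hη₂ hT] at key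
  rwa [Measure.map_map hmix hT]

end LiftConvex

theorem lifted_convexity_transfer_general {d : ℕ}
    (μ m : Measure (EuclideanSpace ℝ (Fin d)))
    (lam : ℝ)
    (T : EuclideanSpace ℝ (Fin d) → EuclideanSpace ℝ (Fin d))
    (hTmeas : Measurable T) (hTpush : μ.map T = m)
    (φ : Measure (EuclideanSpace ℝ (Fin d)) → ℝ)
    (hconvμ : ∀ ξ₁ ξ₂ : EuclideanSpace ℝ (Fin d) → EuclideanSpace ℝ (Fin d),
      Measurable ξ₁ → Measurable ξ₂ →
      Integrable (fun x => ‖ξ₁ x‖ ^ 2) μ → Integrable (fun x => ‖ξ₂ x‖ ^ 2) μ →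
      ∀ t ∈ Set.Icc (0:ℝ) 1,
        φ (μ.map (fun x => (1 - t) • ξ₁ x + t • ξ₂ x)) ≤
          (1 - t) * φ (μ.map ξ₁) + t * φ (μ.map ξ₂) -
            (lam / 2) * t * (1 - t) * ∫ x, ‖ξ₁ x - ξ₂ x‖ ^ 2 ∂μ) :
    ∀ η₁ η₂ : EuclideanSpace ℝ (Fin d) → EuclideanSpace ℝ (Fin d),
      Measurable η₁ → Measurable η₂ →
      Integrable (fun x => ‖η₁ x‖ ^ 2) m → Integrable (fun x => ‖η₂ x‖ ^ 2) m →
      ∀ t ∈ Set.Icc (0:ℝ) 1,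
        φ (m.map (fun x => (1 - t) • η₁ x + t • η₂ x)) ≤
          (1 - t) * φ (m.map η₁) + t * φ (m.map η₂) -
            (lam / 2) * t * (1 - t) * ∫ x, ‖η₁ x - η₂ x‖ ^ 2 ∂m := by
  subst hTpush
  exact IsLiftConvex.map hconvμ hTmeas

theorem lifted_convexity_transfer {d : ℕ}
    (μ m : Measure (EuclideanSpace ℝ (Fin d)))
    [IsProbabilityMeasure μ] [IsProbabilityMeasure m] [NullSingletonClass μ]
    (lam : ℝ)
    (hμ2 : Integrable (fun x => ‖x‖ ^ 2) μ)
    (hm2 : Integrable (fun x => ‖x‖ ^ 2) m)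
    (T : EuclideanSpace ℝ (Fin d) → EuclideanSpace ℝ (Fin d))
    (hTmeas : Measurable T) (hTpush : μ.map T = m)
    (hTL2 : Integrable (fun x => ‖T x‖ ^ 2) μ)
    (φ : Measure (EuclideanSpace ℝ (Fin d)) → ℝ)
    (hconvμ : ∀ ξ₁ ξ₂ : EuclideanSpace ℝ (Fin d) → EuclideanSpace ℝ (Fin d),
      Measurable ξ₁ → Measurable ξ₂ →
      Integrable (fun x => ‖ξ₁ x‖ ^ 2) μ → Integrable (fun x => ‖ξ₂ x‖ ^ 2) μ →
      ∀ t ∈ Set.Icc (0:ℝ) 1,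
        φ (μ.map (fun x => (1 - t) • ξ₁ x + t • ξ₂ x)) ≤
          (1 - t) * φ (μ.map ξ₁) + t * φ (μ.map ξ₂) -
            (lam / 2) * t * (1 - t) * ∫ x, ‖ξ₁ x - ξ₂ x‖ ^ 2 ∂μ) :
    ∀ η₁ η₂ : EuclideanSpace ℝ (Fin d) → EuclideanSpace ℝ (Fin d),
      Measurable η₁ → Measurable η₂ →
      Integrable (fun x => ‖η₁ x‖ ^ 2) m → Integrable (fun x => ‖η₂ x‖ ^ 2) m →
      ∀ t ∈ Set.Icc (0:ℝ) 1,
        φ (m.map (fun x => (1 - t) • η₁ x + t • η₂ x)) ≤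
          (1 - t) * φ (m.map η₁) + t * φ (m.map η₂) -
            (lam / 2) * t * (1 - t) * ∫ x, ‖η₁ x - η₂ x‖ ^ 2 ∂m :=
  lifted_convexity_transfer_general μ m lam T hTmeas hTpush φ hconvμ
end
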